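/- arXiv:1404.7813 — 2 statements merged into one kernel-verified Lean document; each statement's English description precedes it below -/
import Mathlib

section
/- Under the second-order cone disjunctive setup with β > 0, βc₁₀ ≥ c₂₀, βc₁ − c₂ ∉ ±K₂ⁿ, the set of points x ∈ K₂ⁿ satisfying 2c₂₀ − (βc₁ + c₂)ᵀx ≤ sqrt( ((βc₁ − c₂)ᵀx)² + N₁(β)(xₙ² − ‖x̃‖₂²) ) is convex. -/
open Set

noncomputable section

/-- First `n` coordinates of `x ∈ ℝ^{n+1}`. -/
def tl {n : ℕ} (x : Fin (n+1) → ℝ) : Fin n → ℝ := fun i => x i.castSucc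

/-- The second-order cone in `ℝ^{n+1}`. -/
def soc (n : ℕ) : Set (Fin (n+1) → ℝ) :=
  {x | Real.sqrt (∑ i, (tl x i)^2) ≤ x (Fin.last n)}

/-- Dot product. -/
def dot {n : ℕ} (c x : Fin n → ℝ) : ℝ := ∑ i, c i * x i

set_option maxHeartbeats 1000000

lemma aux_sq (p q r s : ℝ) (h1 : r ≤ p) (h2 : s ≤ q) (hr : 0 ≤ r) (hs : 0 ≤ s) :
    (p^2 - r^2)*(q^2 - s^2) ≤ (p*q - r*s)^2 := by nlinarith [sq_nonneg (p*s - q*r)]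

/-- Core scalar inequality: `√(qx)·√(qy) ≤ B` given the decomposition data. -/
lemma key_scalar (D dn Px Py T Sx Sy Xn Yn Wxx Wyy Wxy : ℝ)
    (hdn : dn ^ 2 < D)
    (hWxx : Wxx = D^2*Sx - D*Px^2) (hWyy : Wyy = D^2*Sy - D*Py^2)
    (hWxy : Wxy = D^2*T - D*(Px*Py))
    (hWxx0 : 0 ≤ Wxx) (hWyy0 : 0 ≤ Wyy)
    (hCSw : Wxy ≤ Real.sqrt Wxx * Real.sqrt Wyy)
    (hCSx : Px^2 ≤ D*Sx) (hCSy : Py^2 ≤ D*Sy)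
    (hSxXn : Sx ≤ Xn^2) (hSyYn : Sy ≤ Yn^2)
    (hXn : 0 ≤ Xn) (hYn : 0 ≤ Yn) :
    Real.sqrt ((Px + dn*Xn)^2 + (D - dn^2)*(Xn^2 - Sx)) *
      Real.sqrt ((Py + dn*Yn)^2 + (D - dn^2)*(Yn^2 - Sy))
      ≤ (Px + dn*Xn)*(Py + dn*Yn) + (D - dn^2)*(Xn*Yn - T) := by
  set N : ℝ := D - dn^2 with hN
  have hNpos : 0 < N := by simp [hN]; linarith
  have hD : 0 < D := lt_of_le_of_lt (sq_nonneg dn) hdn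
  set qx : ℝ := (Px + dn*Xn)^2 + N*(Xn^2 - Sx) with hqx
  set qy : ℝ := (Py + dn*Yn)^2 + N*(Yn^2 - Sy) with hqy
  have hqx0 : 0 ≤ qx := add_nonneg (sq_nonneg _) (mul_nonneg hNpos.le (by linarith))
  have hqy0 : 0 ≤ qy := add_nonneg (sq_nonneg _) (mul_nonneg hNpos.le (by linarith))
  set e : ℝ := Real.sqrt D with he
  have he2 : e^2 = D := Real.sq_sqrt hD.le
  have he0 : 0 ≤ e := Real.sqrt_nonneg _
  -- positivity of the linear part on the cone
  have hLaux : ∀ P S Z : ℝ, P^2 ≤ D*S → S ≤ Z^2 → 0 ≤ Z → 0 ≤ dn*P + D*Z := by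
    intro P S Z h1 h2 h3
    have h5 : (dn*P)^2 ≤ (D*Z)^2 := by nlinarith [sq_nonneg dn, sq_nonneg P, hdn.le, sq_nonneg Z]
    have h6 : |dn*P| ≤ |D*Z| := by
      have := Real.sqrt_le_sqrt h5
      rwa [Real.sqrt_sq_eq_abs, Real.sqrt_sq_eq_abs] at this
    have h7 : |D*Z| = D*Z := abs_of_nonneg (mul_nonneg hD.le h3)
    rw [h7] at h6
    linarith [neg_abs_le (dn*P)]
  have hLx : 0 ≤ dn*Px + D*Xn := hLaux Px Sx Xn hCSx hSxXn hXn
  have hLy : 0 ≤ dn*Py + D*Yn := hLaux Py Sy Yn hCSy hSyYn hYn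
  set lx : ℝ := e*(dn*Px + D*Xn) with hlx
  set ly : ℝ := e*(dn*Py + D*Yn) with hly
  have hlx0 : 0 ≤ lx := mul_nonneg he0 hLx
  have hly0 : 0 ≤ ly := mul_nonneg he0 hLy
  set u : ℝ := Real.sqrt (N*Wxx) with hu
  set v : ℝ := Real.sqrt (N*Wyy) with hv
  have hu0 : 0 ≤ u := Real.sqrt_nonneg _
  have hv0 : 0 ≤ v := Real.sqrt_nonneg _
  have hu2 : u^2 = N*Wxx := Real.sq_sqrt (mul_nonneg hNpos.le hWxx0)
  have hv2 : v^2 = N*Wyy := Real.sq_sqrt (mul_nonneg hNpos.le hWyy0)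
  -- decomposition identities
  have hidx : D^2*qx = lx^2 - u^2 := by
    rw [hu2, hWxx, hqx, hN]; rw [hlx]; rw [mul_pow, he2]; ring
  have hidy : D^2*qy = ly^2 - v^2 := by
    rw [hv2, hWyy, hqy, hN]; rw [hly]; rw [mul_pow, he2]; ring
  have hux : u ≤ lx := by
    have h : u^2 ≤ lx^2 := by
      have h0 : 0 ≤ D^2*qx := mul_nonneg (by positivity) hqx0
      linarith [hidx]
    have h2 := Real.sqrt_le_sqrt h
    rwa [Real.sqrt_sq hu0, Real.sqrt_sq hlx0] at h2
  have hvy : v ≤ ly := by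
    have h : v^2 ≤ ly^2 := by
      have h0 : 0 ≤ D^2*qy := mul_nonneg (by positivity) hqy0
      linarith [hidy]
    have h2 := Real.sqrt_le_sqrt h
    rwa [Real.sqrt_sq hv0, Real.sqrt_sq hly0] at h2
  -- the bilinear bound against √(rx·ry)
  have hstep1 : N*Wxy ≤ u*v := by
    have : u*v = N*(Real.sqrt Wxx * Real.sqrt Wyy) := by
      rw [hu, hv, Real.sqrt_mul hNpos.le, Real.sqrt_mul hNpos.le]
      rw [show Real.sqrt N * Real.sqrt Wxx * (Real.sqrt N * Real.sqrt Wyy)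
          = (Real.sqrt N * Real.sqrt N) * (Real.sqrt Wxx * Real.sqrt Wyy) by ring,
        Real.mul_self_sqrt hNpos.le]
    rw [this]
    exact mul_le_mul_of_nonneg_left hCSw hNpos.le
  have hstep2 : Real.sqrt (D^2*qx * (D^2*qy)) ≤ lx*ly - u*v := by
    have h7 : 0 ≤ lx*ly - u*v := by
      have := mul_le_mul hux hvy hv0 hlx0
      linarith
    have h8 : D^2*qx * (D^2*qy) ≤ (lx*ly - u*v)^2 := by
      rw [hidx, hidy]; exact aux_sq lx ly u v hux hvy hu0 hv0
    calc Real.sqrt (D^2*qx * (D^2*qy)) ≤ Real.sqrt ((lx*ly - u*v)^2) := Real.sqrt_le_sqrt h8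
      _ = lx*ly - u*v := Real.sqrt_sq h7
  -- the bilinear identity
  have hidB : D^2*((Px + dn*Xn)*(Py + dn*Yn) + N*(Xn*Yn - T)) = lx*ly - N*Wxy := by
    rw [hWxy, hlx, hly,
      show e*(dn*Px + D*Xn) * (e*(dn*Py + D*Yn)) = e^2*((dn*Px + D*Xn)*(dn*Py + D*Yn)) by ring,
      he2, hN]
    ring
  have hsplit : Real.sqrt (D^2*qx * (D^2*qy)) = D^2 * (Real.sqrt qx * Real.sqrt qy) := by
    rw [Real.sqrt_mul (by positivity), Real.sqrt_mul (by positivity) qx,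
      Real.sqrt_mul (by positivity) qy, Real.sqrt_sq hD.le]
    ring
  have hD2 : (0:ℝ) < D^2 := by positivity
  have final : D^2 * (Real.sqrt qx * Real.sqrt qy)
      ≤ D^2*((Px + dn*Xn)*(Py + dn*Yn) + N*(Xn*Yn - T)) := by
    rw [hidB, ← hsplit]
    calc Real.sqrt (D^2*qx * (D^2*qy)) ≤ lx*ly - u*v := hstep2
      _ ≤ lx*ly - N*Wxy := by linarith
  exact le_of_mul_le_mul_left final hD2


lemma sum_sq_eq {m : ℕ} (u : Fin m → ℝ) : ∑ i, u i * u i = ∑ i, u i ^ 2 :=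
  Finset.sum_congr rfl fun i _ => (sq (u i)).symm

/-- Cauchy–Schwarz in sqrt form. -/
lemma sum_cs {m : ℕ} (u v : Fin m → ℝ) :
    ∑ i, u i * v i ≤ Real.sqrt (∑ i, u i ^ 2) * Real.sqrt (∑ i, v i ^ 2) := by
  calc ∑ i, u i * v i ≤ |∑ i, u i * v i| := le_abs_self _
    _ = Real.sqrt ((∑ i, u i * v i) ^ 2) := (Real.sqrt_sq_eq_abs _).symm
    _ ≤ Real.sqrt ((∑ i, u i ^ 2) * (∑ i, v i ^ 2)) :=
        Real.sqrt_le_sqrt (Finset.sum_mul_sq_le_sq_mul_sq _ _ _)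
    _ = _ := Real.sqrt_mul (Finset.sum_nonneg fun i _ => sq_nonneg _) _

lemma expand_sum {m : ℕ} (d x y : Fin m → ℝ) (A B C E : ℝ) :
    ∑ i, (A * x i - B * d i) * (C * y i - E * d i)
      = A * C * (∑ i, x i * y i) - A * E * (∑ i, d i * x i)
        - B * C * (∑ i, d i * y i) + B * E * (∑ i, d i ^ 2) := by
  rw [Finset.mul_sum, Finset.mul_sum, Finset.mul_sum, Finset.mul_sum,
    ← Finset.sum_sub_distrib, ← Finset.sum_sub_distrib, ← Finset.sum_add_distrib]
  exact Finset.sum_congr rfl fun i _ => by ring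

lemma key_sum {m : ℕ} (d x y : Fin m → ℝ) (dn Xn Yn : ℝ)
    (hdn : dn ^ 2 < ∑ i, d i ^ 2)
    (hx : ∑ i, x i ^ 2 ≤ Xn ^ 2) (hy : ∑ i, y i ^ 2 ≤ Yn ^ 2)
    (hXn : 0 ≤ Xn) (hYn : 0 ≤ Yn) :
    Real.sqrt (((∑ i, d i * x i) + dn * Xn) ^ 2
        + ((∑ i, d i ^ 2) - dn ^ 2) * (Xn ^ 2 - ∑ i, x i ^ 2)) *
      Real.sqrt (((∑ i, d i * y i) + dn * Yn) ^ 2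
        + ((∑ i, d i ^ 2) - dn ^ 2) * (Yn ^ 2 - ∑ i, y i ^ 2))
      ≤ ((∑ i, d i * x i) + dn * Xn) * ((∑ i, d i * y i) + dn * Yn)
        + ((∑ i, d i ^ 2) - dn ^ 2) * (Xn * Yn - ∑ i, x i * y i) := by
  have hD : (0:ℝ) < ∑ i, d i ^ 2 := lt_of_le_of_lt (sq_nonneg dn) hdn
  set D : ℝ := ∑ i, d i ^ 2 with hDdef
  set Px : ℝ := ∑ i, d i * x i with hPx
  set Py : ℝ := ∑ i, d i * y i with hPy
  have hux : ∀ i, D * x i - Px * d i = D * x i - Px * d i := fun _ => rfl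
  -- the projected vectors
  have hWxx : ∑ i, (D * x i - Px * d i) * (D * x i - Px * d i)
      = D^2 * (∑ i, x i ^ 2) - D * Px^2 := by
    rw [expand_sum d x x D Px D Px, ← hPx, ← hDdef, sum_sq_eq x]; ring
  have hWyy : ∑ i, (D * y i - Py * d i) * (D * y i - Py * d i)
      = D^2 * (∑ i, y i ^ 2) - D * Py^2 := by
    rw [expand_sum d y y D Py D Py, ← hPy, ← hDdef, sum_sq_eq y]; ring
  have hWxy : ∑ i, (D * x i - Px * d i) * (D * y i - Py * d i)
      = D^2 * (∑ i, x i * y i) - D * (Px * Py) := by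
    rw [expand_sum d x y D Px D Py, ← hPx, ← hPy, ← hDdef]; ring
  have hWxx0 : 0 ≤ D^2 * (∑ i, x i ^ 2) - D * Px^2 := by
    rw [← hWxx]; exact Finset.sum_nonneg fun i _ => mul_self_nonneg _
  have hWyy0 : 0 ≤ D^2 * (∑ i, y i ^ 2) - D * Py^2 := by
    rw [← hWyy]; exact Finset.sum_nonneg fun i _ => mul_self_nonneg _
  have hCSw : D^2 * (∑ i, x i * y i) - D * (Px * Py)
      ≤ Real.sqrt (D^2 * (∑ i, x i ^ 2) - D * Px^2) *
        Real.sqrt (D^2 * (∑ i, y i ^ 2) - D * Py^2) := by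
    rw [← hWxx, ← hWyy, ← hWxy]
    calc ∑ i, (D * x i - Px * d i) * (D * y i - Py * d i)
        ≤ Real.sqrt (∑ i, (D * x i - Px * d i) ^ 2) *
          Real.sqrt (∑ i, (D * y i - Py * d i) ^ 2) := sum_cs _ _
      _ = _ := by rw [← sum_sq_eq fun i => D * x i - Px * d i,
            ← sum_sq_eq fun i => D * y i - Py * d i]
  have hCSx : Px^2 ≤ D * (∑ i, x i ^ 2) := Finset.sum_mul_sq_le_sq_mul_sq _ d x
  have hCSy : Py^2 ≤ D * (∑ i, y i ^ 2) := Finset.sum_mul_sq_le_sq_mul_sq _ d y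
  exact key_scalar D dn Px Py (∑ i, x i * y i) (∑ i, x i ^ 2) (∑ i, y i ^ 2) Xn Yn
    _ _ _ hdn rfl rfl rfl hWxx0 hWyy0 hCSw hCSx hCSy hx hy hXn hYn


lemma sum_sq_comb {m : ℕ} (u v : Fin m → ℝ) (a b : ℝ) :
    ∑ i, (a * u i + b * v i) ^ 2
      = a^2 * (∑ i, u i ^ 2) + 2*a*b*(∑ i, u i * v i) + b^2 * (∑ i, v i ^ 2) := by
  rw [Finset.mul_sum, Finset.mul_sum, Finset.mul_sum, ← Finset.sum_add_distrib,
    ← Finset.sum_add_distrib]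
  exact Finset.sum_congr rfl fun i _ => by ring

lemma dot_comb {m : ℕ} (c x y : Fin m → ℝ) (a b : ℝ) :
    dot c (a • x + b • y) = a * dot c x + b * dot c y := by
  simp only [dot, Pi.add_apply, Pi.smul_apply, smul_eq_mul]
  rw [Finset.mul_sum, Finset.mul_sum, ← Finset.sum_add_distrib]
  exact Finset.sum_congr rfl fun i _ => by ring

lemma sum_cs' {m : ℕ} (u v : Fin m → ℝ) :
    ∑ i, u i * v i ≤ Real.sqrt (∑ i, u i ^ 2) * Real.sqrt (∑ i, v i ^ 2) := by
  calc ∑ i, u i * v i ≤ |∑ i, u i * v i| := le_abs_self _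
    _ = Real.sqrt ((∑ i, u i * v i) ^ 2) := (Real.sqrt_sq_eq_abs _).symm
    _ ≤ Real.sqrt ((∑ i, u i ^ 2) * (∑ i, v i ^ 2)) :=
        Real.sqrt_le_sqrt (Finset.sum_mul_sq_le_sq_mul_sq _ _ _)
    _ = _ := Real.sqrt_mul (Finset.sum_nonneg fun i _ => sq_nonneg _) _

lemma soc_comb {m : ℕ} (u v : Fin m → ℝ) (a b Xn Yn : ℝ) (ha : 0 ≤ a) (hb : 0 ≤ b)
    (hx : Real.sqrt (∑ i, u i ^ 2) ≤ Xn) (hy : Real.sqrt (∑ i, v i ^ 2) ≤ Yn) :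
    Real.sqrt (a^2 * (∑ i, u i ^ 2) + 2*a*b*(∑ i, u i * v i) + b^2 * (∑ i, v i ^ 2))
      ≤ a * Xn + b * Yn := by
  set sx : ℝ := Real.sqrt (∑ i, u i ^ 2) with hsx
  set sy : ℝ := Real.sqrt (∑ i, v i ^ 2) with hsy
  have hsx0 : 0 ≤ sx := Real.sqrt_nonneg _
  have hsy0 : 0 ≤ sy := Real.sqrt_nonneg _
  have hsx2 : sx^2 = ∑ i, u i ^ 2 := Real.sq_sqrt (Finset.sum_nonneg fun i _ => sq_nonneg _)
  have hsy2 : sy^2 = ∑ i, v i ^ 2 := Real.sq_sqrt (Finset.sum_nonneg fun i _ => sq_nonneg _)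
  have hT : ∑ i, u i * v i ≤ sx * sy := sum_cs' u v
  have h1 : a^2 * (∑ i, u i ^ 2) + 2*a*b*(∑ i, u i * v i) + b^2 * (∑ i, v i ^ 2)
      ≤ (a*sx + b*sy)^2 := by
    rw [← hsx2, ← hsy2]
    nlinarith [mul_nonneg ha hb]
  calc Real.sqrt (a^2 * (∑ i, u i ^ 2) + 2*a*b*(∑ i, u i * v i) + b^2 * (∑ i, v i ^ 2))
      ≤ Real.sqrt ((a*sx + b*sy)^2) := Real.sqrt_le_sqrt h1
    _ = a*sx + b*sy := Real.sqrt_sq (by positivity)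
    _ ≤ a * Xn + b * Yn :=
        add_le_add (mul_le_mul_of_nonneg_left hx ha) (mul_le_mul_of_nonneg_left hy hb)

theorem stmt_6 {n : ℕ}
    (c₁ c₂ : Fin (n+1) → ℝ) (c₁₀ c₂₀ : ℝ)
    (hc₁₀ : c₁₀ = 0 ∨ c₁₀ = 1 ∨ c₁₀ = -1)
    (hc₂₀ : c₂₀ = 0 ∨ c₂₀ = 1 ∨ c₂₀ = -1)
    (hord : c₂₀ ≤ c₁₀)
    (C₁ C₂ : Set (Fin (n+1) → ℝ))
    (hC₁ : C₁ = {x ∈ soc n | c₁₀ ≤ dot c₁ x})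
    (hC₂ : C₂ = {x ∈ soc n | c₂₀ ≤ dot c₂ x})
    (h12 : ¬ C₁ ⊆ C₂) (h21 : ¬ C₂ ⊆ C₁)
    (hsf₁ : (C₁ ∩ interior (soc n)).Nonempty)
    (hsf₂ : (C₂ ∩ interior (soc n)).Nonempty)
    (β : ℝ) (hβ : 0 < β) (hβc : c₂₀ ≤ β * c₁₀)
    (hout : β • c₁ - c₂ ∉ soc n ∧ -(β • c₁ - c₂) ∉ soc n) :
    Convex ℝ {x ∈ soc n |
      2 * c₂₀ - dot (β • c₁ + c₂) x ≤
        Real.sqrt ((dot (β • c₁ - c₂) x)^2 +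
          ((∑ i, (tl (β • c₁ - c₂) i)^2) - ((β • c₁ - c₂) (Fin.last n))^2) *
            ((x (Fin.last n))^2 - ∑ i, (tl x i)^2))} := by
  clear hc₁₀ hc₂₀ hord hC₁ hC₂ h12 h21 hsf₁ hsf₂ hβ hβc
  set d : Fin (n+1) → ℝ := β • c₁ - c₂ with hd
  set s : Fin (n+1) → ℝ := β • c₁ + c₂ with hs
  intro x hx y hy a b ha hb hab
  obtain ⟨hxK, hxI⟩ := hx
  obtain ⟨hyK, hyI⟩ := hy
  simp only [soc, Set.mem_setOf_eq] at hxK hyK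
  -- notation
  have hSx0 : (0:ℝ) ≤ ∑ i, (tl x i)^2 := Finset.sum_nonneg fun i _ => sq_nonneg _
  have hSy0 : (0:ℝ) ≤ ∑ i, (tl y i)^2 := Finset.sum_nonneg fun i _ => sq_nonneg _
  have hXn0 : 0 ≤ x (Fin.last n) := (Real.sqrt_nonneg _).trans hxK
  have hYn0 : 0 ≤ y (Fin.last n) := (Real.sqrt_nonneg _).trans hyK
  have hSx : ∑ i, (tl x i)^2 ≤ (x (Fin.last n))^2 := by
    have := pow_le_pow_left₀ (Real.sqrt_nonneg _) hxK 2
    rwa [Real.sq_sqrt hSx0] at this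
  have hSy : ∑ i, (tl y i)^2 ≤ (y (Fin.last n))^2 := by
    have := pow_le_pow_left₀ (Real.sqrt_nonneg _) hyK 2
    rwa [Real.sq_sqrt hSy0] at this
  -- d is outside ±K, so its tail dominates: dn² < D
  have hD0 : (0:ℝ) ≤ ∑ i, (tl d i)^2 := Finset.sum_nonneg fun i _ => sq_nonneg _
  have hdn : (d (Fin.last n))^2 < ∑ i, (tl d i)^2 := by
    have h1 := hout.1
    have h2 := hout.2
    simp only [soc, Set.mem_setOf_eq, not_le] at h1 h2
    have hneg : ∑ i, (tl (-d) i)^2 = ∑ i, (tl d i)^2 :=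
      Finset.sum_congr rfl fun i _ => by simp [tl]
    rw [hneg] at h2
    have h2' : -(d (Fin.last n)) < Real.sqrt (∑ i, (tl d i)^2) := by
      simpa using h2
    nlinarith [Real.sq_sqrt hD0, Real.sqrt_nonneg (∑ i, (tl d i)^2)]
  -- dot product decompositions
  have hdot : ∀ u : Fin (n+1) → ℝ,
      dot d u = (∑ i, tl d i * tl u i) + d (Fin.last n) * u (Fin.last n) := by
    intro u
    rw [dot, Fin.sum_univ_castSucc]
    rfl
  -- the key concavity inequality
  have hkey := key_sum (tl d) (tl x) (tl y) (d (Fin.last n)) (x (Fin.last n)) (y (Fin.last n))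
    hdn hSx hSy hXn0 hYn0
  rw [← hdot x, ← hdot y] at hkey
  -- membership of the convex combination
  have htlz : ∀ i, tl (a • x + b • y) i = a * tl x i + b * tl y i := by
    intro i; simp [tl]
  have hSz : ∑ i, (tl (a • x + b • y) i)^2
      = a^2 * (∑ i, (tl x i)^2) + 2*a*b*(∑ i, tl x i * tl y i) + b^2 * (∑ i, (tl y i)^2) := by
    rw [Finset.sum_congr rfl fun i _ => by rw [htlz i]]
    exact sum_sq_comb _ _ _ _
  have hZn : (a • x + b • y) (Fin.last n) = a * x (Fin.last n) + b * y (Fin.last n) := by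
    simp
  constructor
  · -- in the cone
    show Real.sqrt (∑ i, (tl (a • x + b • y) i)^2) ≤ (a • x + b • y) (Fin.last n)
    rw [hSz, hZn]
    exact soc_comb (tl x) (tl y) a b _ _ ha hb hxK hyK
  · -- the inequality
    set QX : ℝ := (dot d x)^2 +
      ((∑ i, (tl d i)^2) - (d (Fin.last n))^2) * ((x (Fin.last n))^2 - ∑ i, (tl x i)^2)
      with hQX
    set QY : ℝ := (dot d y)^2 +
      ((∑ i, (tl d i)^2) - (d (Fin.last n))^2) * ((y (Fin.last n))^2 - ∑ i, (tl y i)^2)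
      with hQY
    have hN0 : (0:ℝ) ≤ (∑ i, (tl d i)^2) - (d (Fin.last n))^2 := by linarith
    have hQX0 : 0 ≤ QX := by
      rw [hQX]; exact add_nonneg (sq_nonneg _) (mul_nonneg hN0 (by linarith))
    have hQY0 : 0 ≤ QY := by
      rw [hQY]; exact add_nonneg (sq_nonneg _) (mul_nonneg hN0 (by linarith))
    have hkey' : Real.sqrt QX * Real.sqrt QY ≤ (dot d x) * (dot d y)
        + ((∑ i, (tl d i)^2) - (d (Fin.last n))^2)
          * (x (Fin.last n) * y (Fin.last n) - ∑ i, tl x i * tl y i) := by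
      rw [hQX, hQY]; exact hkey
    -- expand q at the combination
    have hqz : (dot d (a • x + b • y))^2 +
        ((∑ i, (tl d i)^2) - (d (Fin.last n))^2) *
          (((a • x + b • y) (Fin.last n))^2 - ∑ i, (tl (a • x + b • y) i)^2)
        = a^2 * QX + 2*a*b*((dot d x) * (dot d y)
            + ((∑ i, (tl d i)^2) - (d (Fin.last n))^2)
              * (x (Fin.last n) * y (Fin.last n) - ∑ i, tl x i * tl y i)) + b^2 * QY := by
      rw [dot_comb, hZn, hSz, hQX, hQY]; ring
    have hsum0 : 0 ≤ a * Real.sqrt QX + b * Real.sqrt QY := by positivity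
    have hcomb : (a * Real.sqrt QX + b * Real.sqrt QY)^2
        ≤ (dot d (a • x + b • y))^2 +
          ((∑ i, (tl d i)^2) - (d (Fin.last n))^2) *
            (((a • x + b • y) (Fin.last n))^2 - ∑ i, (tl (a • x + b • y) i)^2) := by
      rw [hqz]
      have h2ab : (0:ℝ) ≤ 2*a*b := by positivity
      have hmul := mul_le_mul_of_nonneg_left hkey' h2ab
      have he1 : (a * Real.sqrt QX + b * Real.sqrt QY)^2
          = a^2 * QX + 2*a*b*(Real.sqrt QX * Real.sqrt QY) + b^2 * QY := by
        have e1 : Real.sqrt QX ^ 2 = QX := Real.sq_sqrt hQX0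
        have e2 : Real.sqrt QY ^ 2 = QY := Real.sq_sqrt hQY0
        calc (a * Real.sqrt QX + b * Real.sqrt QY)^2
            = a^2 * Real.sqrt QX ^2 + 2*a*b*(Real.sqrt QX * Real.sqrt QY)
              + b^2 * Real.sqrt QY ^2 := by ring
          _ = _ := by rw [e1, e2]
      rw [he1]
      linarith
    have hfin : a * Real.sqrt QX + b * Real.sqrt QY ≤
        Real.sqrt ((dot d (a • x + b • y))^2 +
          ((∑ i, (tl d i)^2) - (d (Fin.last n))^2) *
            (((a • x + b • y) (Fin.last n))^2 - ∑ i, (tl (a • x + b • y) i)^2)) :=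
      (Real.le_sqrt hsum0 ((sq_nonneg _).trans hcomb)).mpr hcomb
    have hdots : dot s (a • x + b • y) = a * dot s x + b * dot s y := dot_comb _ _ _ _ _
    have hax := mul_le_mul_of_nonneg_left hxI ha
    have hby := mul_le_mul_of_nonneg_left hyI hb
    show 2 * c₂₀ - dot s (a • x + b • y) ≤ Real.sqrt _
    rw [hdots]
    have hsplit : 2 * c₂₀ - (a * dot s x + b * dot s y)
        = a * (2 * c₂₀ - dot s x) + b * (2 * c₂₀ - dot s y) := by
      linear_combination (-2 * c₂₀) * hab
    rw [hsplit]
    calc a * (2 * c₂₀ - dot s x) + b * (2 * c₂₀ - dot s y)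
        ≤ a * Real.sqrt QX + b * Real.sqrt QY := add_le_add hax hby
      _ ≤ _ := hfin
end
end

section
/- Let S ⊂ ℝⁿ be a closed, convex, pointed set and S₁ = {x ∈ S : c₁ᵀx ≥ c₁₀}, S₂ = {x ∈ S : c₂ᵀx ≥ c₂₀}, with S₁ ⊄ S₂, S₂ ⊄ S₁. If there exists r* ∈ rec S with c₁ᵀr* < 0 = c₂ᵀr* and the problem inf{c₂ᵀx : x ∈ S₁} attains its infimum at some point of S₁, then conv(S₁ ∪ S₂) is not closed. -/
open Set

/-- Recession cone of a set `S ⊆ ℝⁿ`. -/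
def recCone {n : ℕ} (S : Set (Fin n → ℝ)) : Set (Fin n → ℝ) :=
  {r | ∀ x ∈ S, ∀ t : ℝ, 0 ≤ t → x + t • r ∈ S}

lemma dot_add' {n : ℕ} (c x y : Fin n → ℝ) : dot c (x + y) = dot c x + dot c y := by
  simp [dot, mul_add, Finset.sum_add_distrib]

lemma dot_smul' {n : ℕ} (c : Fin n → ℝ) (t : ℝ) (x : Fin n → ℝ) :
    dot c (t • x) = t * dot c x := by
  simp [dot, Finset.mul_sum, mul_left_comm]

lemma dot_linear {n : ℕ} (c : Fin n → ℝ) : IsLinearMap ℝ (dot c) :=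
  ⟨fun x y => dot_add' c x y, fun t x => dot_smul' c t x⟩

theorem stmt_16 {n : ℕ} (S : Set (Fin n → ℝ))
    (hSclosed : IsClosed S) (hSconv : Convex ℝ S)
    (hSpointed : ∀ r, r ∈ recCone S → -r ∈ recCone S → r = 0)
    (c₁ c₂ : Fin n → ℝ) (c₁₀ c₂₀ : ℝ)
    (S₁ S₂ : Set (Fin n → ℝ))
    (hS₁ : S₁ = {x ∈ S | c₁₀ ≤ dot c₁ x})
    (hS₂ : S₂ = {x ∈ S | c₂₀ ≤ dot c₂ x})
    (h12 : ¬ S₁ ⊆ S₂) (h21 : ¬ S₂ ⊆ S₁)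
    (r : Fin n → ℝ) (hr : r ∈ recCone S)
    (hr₁ : dot c₁ r < 0) (hr₂ : dot c₂ r = 0)
    (hsolv : ∃ x₀ ∈ S₁, ∀ x ∈ S₁, dot c₂ x₀ ≤ dot c₂ x) :
    ¬ IsClosed (convexHull ℝ (S₁ ∪ S₂)) := by
  intro hC
  obtain ⟨x₀, hx₀, hmin⟩ := hsolv
  obtain ⟨y, hyS₂, -⟩ := not_subset.1 h21
  have hS₁conv : Convex ℝ S₁ := hS₁ ▸ hSconv.inter (convex_halfSpace_ge (dot_linear c₁) c₁₀)
  have hS₂conv : Convex ℝ S₂ := hS₂ ▸ hSconv.inter (convex_halfSpace_ge (dot_linear c₂) c₂₀)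
  have hx₀S : x₀ ∈ S := (hS₁ ▸ hx₀).1
  have hx₀c : c₁₀ ≤ dot c₁ x₀ := (hS₁ ▸ hx₀).2
  -- β := dot c₂ x₀ < c₂₀
  have hβ : dot c₂ x₀ < c₂₀ := by
    by_contra h
    push_neg at h
    apply h12
    intro x hx
    rw [hS₂]
    exact ⟨(hS₁ ▸ hx).1, le_trans h (hmin x hx)⟩
  -- r is a recession direction of S₂
  have hrS₂ : ∀ x ∈ S₂, ∀ t : ℝ, 0 ≤ t → x + t • r ∈ S₂ := by
    intro x hx t ht
    rw [hS₂] at hx ⊢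
    refine ⟨hr x hx.1 t ht, ?_⟩
    rw [dot_add', dot_smul', hr₂]
    linarith [hx.2]
  set T : ℝ := (dot c₁ x₀ - c₁₀ + 1) / (-dot c₁ r) with hTdef
  have hT : 0 < T := div_pos (by linarith) (by linarith)
  set p : Fin n → ℝ := x₀ + T • r with hpdef
  have hd : dot c₁ r ≠ 0 := ne_of_lt hr₁
  have hpc₁ : dot c₁ p = c₁₀ - 1 := by
    have hTd : T * dot c₁ r = -(dot c₁ x₀ - c₁₀ + 1) := by
      rw [hTdef, div_mul_eq_mul_div, mul_div_assoc, div_neg, div_self hd]; ring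
    rw [hpdef, dot_add', dot_smul']
    linarith
  have hpc₂ : dot c₂ p = dot c₂ x₀ := by
    rw [hpdef, dot_add', dot_smul', hr₂, mul_zero, add_zero]
  -- p is a limit of points in the hull
  have hpC : p ∈ convexHull ℝ (S₁ ∪ S₂) := by
    have hmem : ∀ k : ℕ, x₀ + T • r + (1 / (k + 1 : ℝ)) • (y - x₀) ∈ convexHull ℝ (S₁ ∪ S₂) := by
      intro k
      set lam : ℝ := 1 / (k + 1 : ℝ) with hlam
      have hlam0 : 0 < lam := by positivity
      have hlam1 : lam ≤ 1 := by
        rw [hlam, div_le_one (by positivity)]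
        linarith [Nat.cast_nonneg (α := ℝ) k]
      have hz : y + (T / lam) • r ∈ S₂ := hrS₂ y hyS₂ _ (le_of_lt (div_pos hT hlam0))
      have h1 : x₀ ∈ convexHull ℝ (S₁ ∪ S₂) := subset_convexHull ℝ _ (Or.inl hx₀)
      have h2 : y + (T / lam) • r ∈ convexHull ℝ (S₁ ∪ S₂) := subset_convexHull ℝ _ (Or.inr hz)
      have key : x₀ + T • r + lam • (y - x₀) = (1 - lam) • x₀ + lam • (y + (T / lam) • r) := by
        rw [smul_add lam, smul_smul, mul_div_cancel₀ _ (ne_of_gt hlam0)]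
        module
      rw [key]
      exact (convex_convexHull ℝ (S₁ ∪ S₂)) h1 h2 (by linarith : (0:ℝ) ≤ 1 - lam)
        (le_of_lt hlam0) (by ring)
    have h0 : Filter.Tendsto (fun k : ℕ => 1 / (k + 1 : ℝ)) Filter.atTop (nhds 0) :=
      tendsto_one_div_add_atTop_nhds_zero_nat
    have hlim : Filter.Tendsto (fun k : ℕ => x₀ + T • r + (1 / (k + 1 : ℝ)) • (y - x₀))
        Filter.atTop (nhds p) := by
      have := (h0.smul_const (y - x₀)).const_add (x₀ + T • r)
      simpa [hpdef] using this
    exact hC.mem_of_tendsto hlim (Filter.Eventually.of_forall hmem)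
  -- p cannot be in the hull
  have hS₁ne : S₁.Nonempty := ⟨x₀, hx₀⟩
  have hS₂ne : S₂.Nonempty := ⟨y, hyS₂⟩
  rw [hS₁conv.convexHull_union hS₂conv hS₁ne hS₂ne, mem_convexJoin] at hpC
  obtain ⟨a, ha, b, hb, hseg⟩ := hpC
  obtain ⟨u, v, hu, hv, huv, hab⟩ := hseg
  have hac₂ : dot c₂ x₀ ≤ dot c₂ a := hmin a ha
  have hbc₂ : c₂₀ ≤ dot c₂ b := (hS₂ ▸ hb).2
  have hcomb : u * dot c₂ a + v * dot c₂ b = dot c₂ x₀ := by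
    rw [← hpc₂, ← hab, dot_add', dot_smul', dot_smul']
  have hv0 : v = 0 := by
    by_contra hv'
    have hvpos : 0 < v := lt_of_le_of_ne hv (Ne.symm hv')
    have h1 : u * dot c₂ x₀ ≤ u * dot c₂ a := mul_le_mul_of_nonneg_left hac₂ hu
    have h2 : v * c₂₀ ≤ v * dot c₂ b := mul_le_mul_of_nonneg_left hbc₂ (le_of_lt hvpos)
    have h3 : v * dot c₂ x₀ < v * c₂₀ := mul_lt_mul_of_pos_left hβ hvpos
    have h4 : u * dot c₂ x₀ + v * dot c₂ x₀ = dot c₂ x₀ := by rw [← add_mul, huv, one_mul]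
    linarith
  have hu1 : u = 1 := by linarith
  have hpa : p = a := by rw [← hab, hv0, hu1]; simp
  have := (hS₁ ▸ ha).2
  rw [← hpa, hpc₁] at this
  linarith
end
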